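/- arXiv:2003.06569 — 2 statements merged into one kernel-verified Lean document; each statement's English description precedes it below -/
import Mathlib

section
/- Suppose for all w in D(t₀) (the set of primitive normal vectors of facets of Γ(fg) containing the smallest face through the diagonal point (t₀,…,t₀)) one has d(w,Γ(f)) ≠ 0 and d(w,Γ(g)) ≠ 0. Then there is no w ∈ T₊ with σ(w)/(d(w,Γ(g)) − d(w,Γ(f))) = 1/t₀, and no w ∈ T₋ with −σ(w)/(d(w,Γ(f)) − d(w,Γ(g))) = −1/t₀. In particular ±1/t₀ are not candidate poles coming from the cones. -/
open Finset Pointwise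

variable {n : ℕ}

/-- The pairing `⟨k,x⟩ = ∑ i, k i * x i`. -/
noncomputable def dotp (k x : Fin n → ℝ) : ℝ := ∑ i, k i * x i

/-- Convex hull of the union of translated positive orthants `m + ℝ₊ⁿ`. -/
def orthHull (S : Set (Fin n → ℝ)) : Set (Fin n → ℝ) :=
  convexHull ℝ (⋃ m ∈ S, {x : Fin n → ℝ | ∀ i, m i ≤ x i})

/-- `Γ` is a Newton polyhedron: the convex hull of `⋃_{m ∈ supp} (m + ℝ₊ⁿ)`
for a nonempty finite set of lattice points (the support of a polynomial
vanishing at the origin). -/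
def IsNewtonPolyhedron (Γ : Set (Fin n → ℝ)) : Prop :=
  ∃ S : Finset (Fin n → ℕ), S.Nonempty ∧
    Γ = orthHull ((fun m : Fin n → ℕ => fun i => (m i : ℝ)) '' (S : Set (Fin n → ℕ)))

/-- `d(k,Γ) = min_{x ∈ Γ} ⟨k,x⟩`. -/
noncomputable def dval (k : Fin n → ℝ) (Γ : Set (Fin n → ℝ)) : ℝ :=
  sInf ((fun x => dotp k x) '' Γ)

/-- First meet locus `F(k,Γ) = {x ∈ Γ : ⟨k,x⟩ = d(k,Γ)}`. -/
def fmeet (k : Fin n → ℝ) (Γ : Set (Fin n → ℝ)) : Set (Fin n → ℝ) :=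
  {x ∈ Γ | dotp k x = dval k Γ}

/-- `σ(k) = ∑ i, k i`. -/
noncomputable def sigmaS (k : Fin n → ℝ) : ℝ := ∑ i, k i

/-- The smallest face of `Γ` containing a point `p`: the intersection of all
first meet loci (faces) containing `p`. -/
def minFace (Γ : Set (Fin n → ℝ)) (p : Fin n → ℝ) : Set (Fin n → ℝ) :=
  ⋂₀ {F | p ∈ F ∧ ∃ k : Fin n → ℝ, (∀ i, 0 ≤ k i) ∧ F = fmeet k Γ}

/-- Cast a lattice vector to `ℝⁿ`. -/
def natVec (w : Fin n → ℕ) : Fin n → ℝ := fun i => (w i : ℝ)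

/-- `w` is the primitive normal vector of a facet (face of dimension `n-1`) of `Γ`. -/
def IsPrimFacetNormal (Γ : Set (Fin n → ℝ)) (w : Fin n → ℕ) : Prop :=
  w ≠ 0 ∧ Finset.univ.gcd w = 1 ∧
    Module.finrank ℝ (affineSpan ℝ (fmeet (natVec w) Γ)).direction = n - 1

/-- `D(t₀)`: primitive normal vectors of the facets of `Γ` containing the
smallest face through the diagonal point `p = (t₀,…,t₀)`. -/
def Dset (Γ : Set (Fin n → ℝ)) (p : Fin n → ℝ) : Set (Fin n → ℕ) :=
  {w | IsPrimFacetNormal Γ w ∧ minFace Γ p ⊆ fmeet (natVec w) Γ}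

/-!
Suppose `w ∈ T₊` realizes `1/t₀`, i.e. `t₀ σ(w) = d(w,Γ(g)) − d(w,Γ(f))`. The diagonal point
`p = a + b` (`a ∈ Γ(f)`, `b ∈ Γ(g)`) gives `⟨w,a⟩ + ⟨w,b⟩ = t₀ σ(w)`, so `⟨w,a⟩ = d(w,Γ(f)) = 0`
and `p` lies on the face `F(w,Γ(fg))`. It remains to replace `w` by a primitive facet normal `w'`
with `p ∈ F(w',Γ(fg))` and `supp w' ⊆ supp w`: then `⟨w',a⟩ = 0`, so `d(w',Γ(f)) = 0` with
`w' ∈ D(t₀)`, a contradiction. The case `T₋` is symmetric.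

To find `w'`, take an extreme point `u` of the compact polytope of normal vectors `u ≥ 0` of
`Γ(fg)` at `p`, supported in `supp w` and normalized by `σ(u) = 1` (Krein–Milman). Every direction
`v` orthogonal to the face `F(u,Γ(fg))` with `σ(v) = 0` keeps `u ± εv` in the polytope, so
extremality forces `v = 0`: the face is a facet and its orthogonal complement is the line `ℝu`.
The face is spanned by lattice vectors, so this line contains a nonzero integer vector (Siegel's
lemma), which we make nonnegative and primitive.
-/

open Module Filter Topology

lemma dotp_eq_dotProduct (k x : Fin n → ℝ) : dotp k x = k ⬝ᵥ x := rfl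

section Nonneg

variable {ι : Type*} [Fintype ι] {u v q : ι → ℝ}

lemma mul_eq_zero_of_dotProduct_eq_zero (hu : 0 ≤ u) (hq : 0 ≤ q) (huq : u ⬝ᵥ q = 0) (i : ι) :
    u i * q i = 0 :=
  (Finset.sum_eq_zero_iff_of_nonneg fun j _ => mul_nonneg (hu j) (hq j)).1 huq i
    (Finset.mem_univ i)

lemma dotProduct_eq_zero_of_forall_eq_zero_imp (hu : 0 ≤ u) (hq : 0 ≤ q) (huq : u ⬝ᵥ q = 0)
    (hv : ∀ i, u i = 0 → v i = 0) : v ⬝ᵥ q = 0 :=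
  Finset.sum_eq_zero fun i _ => by
    rcases mul_eq_zero.1 (mul_eq_zero_of_dotProduct_eq_zero hu hq huq i) with h | h
    · rw [hv i h, zero_mul]
    · rw [h, mul_zero]

end Nonneg

lemma mem_convexHull_setOf_eq_of_le {E : Type*} [AddCommGroup E] [Module ℝ E] {s : Set E}
    (f : E →ₗ[ℝ] ℝ) {c : ℝ} (hs : ∀ x ∈ s, c ≤ f x) {y : E} (hy : y ∈ convexHull ℝ s)
    (hfy : f y ≤ c) : y ∈ convexHull ℝ {x ∈ s | f x = c} := by
  suffices convexHull ℝ s ⊆ {y | c ≤ f y ∧ (f y ≤ c → y ∈ convexHull ℝ {x ∈ s | f x = c})} from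
    (this hy).2 hfy
  refine convexHull_min (fun x hx => ⟨hs x hx, fun h => subset_convexHull ℝ _
    ⟨hx, le_antisymm h (hs x hx)⟩⟩) (convex_iff_forall_pos.2 ?_)
  rintro y₁ ⟨h₁, h₁'⟩ y₂ ⟨h₂, h₂'⟩ a b ha hb hab
  have hcombo : f (a • y₁ + b • y₂) - c = a * (f y₁ - c) + b * (f y₂ - c) := by
    simp only [map_add, map_smul, smul_eq_mul]
    linear_combination c * hab
  have h₁c := mul_nonneg ha.le (sub_nonneg.2 h₁)
  have h₂c := mul_nonneg hb.le (sub_nonneg.2 h₂)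
  refine ⟨by linarith, fun h => ?_⟩
  have hy₁ : f y₁ ≤ c := by nlinarith
  have hy₂ : f y₂ ≤ c := by nlinarith
  exact convex_convexHull ℝ _ (h₁' hy₁) (h₂' hy₂) ha.le hb.le hab

lemma eventually_nonneg_add_mul {a b : ℝ} (ha : 0 ≤ a) (hab : a = 0 → b = 0) :
    ∀ᶠ ε in 𝓝 (0 : ℝ), 0 ≤ a + ε * b := by
  rcases ha.eq_or_lt with rfl | ha
  · simp [hab rfl]
  · have : Tendsto (fun ε : ℝ => a + ε * b) (𝓝 0) (𝓝 a) := by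
      simpa using (tendsto_const_nhds (x := a)).add ((tendsto_id (x := 𝓝 (0 : ℝ))).mul_const b)
    exact (this.eventually_const_lt ha).mono fun _ => le_of_lt

lemma eq_zero_of_mem_extremePoints_of_eventually_add_smul_mem {E : Type*} [AddCommGroup E]
    [Module ℝ E] {A : Set E} {u v : E} (hu : u ∈ A.extremePoints ℝ)
    (hv : ∀ᶠ ε in 𝓝 (0 : ℝ), u + ε • v ∈ A) : v = 0 := by
  have hv' : ∀ᶠ ε in 𝓝 (0 : ℝ), u + (-ε) • v ∈ A :=
    (continuous_neg.tendsto' (0 : ℝ) 0 neg_zero).eventually hv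
  obtain ⟨ε, ⟨hplus, hminus⟩, hε⟩ :=
    (((hv.and hv').filter_mono nhdsWithin_le_nhds).and
      (self_mem_nhdsWithin (s := Set.Ioi 0))).exists
  have hmid : u ∈ openSegment ℝ (u + (-ε) • v) (u + ε • v) :=
    ⟨1 / 2, 1 / 2, by norm_num, by norm_num, by norm_num, by module⟩
  have := ((mem_extremePoints.1 hu).2 _ hminus _ hplus hmid).2
  rw [add_eq_left, smul_eq_zero] at this
  exact this.resolve_left (ne_of_gt hε)

section OrthHull

variable {S : Set (Fin n → ℝ)} {u x q : Fin n → ℝ}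

lemma orthHull_eq_convexHull_add (S : Set (Fin n → ℝ)) :
    orthHull S = convexHull ℝ S + Set.Ici 0 := by
  have : (⋃ m ∈ S, {x : Fin n → ℝ | ∀ i, m i ≤ x i}) = S + Set.Ici 0 := by
    ext x
    simp only [Set.mem_iUnion, exists_prop, Set.mem_add, Set.mem_Ici]
    constructor
    · rintro ⟨m, hm, hmx⟩
      exact ⟨m, hm, x - m, fun i => sub_nonneg.2 (hmx i), add_sub_cancel _ _⟩
    · rintro ⟨m, hm, q, hq, rfl⟩
      exact ⟨m, hm, fun i => le_add_of_nonneg_right (hq i)⟩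
  rw [orthHull, this, convexHull_add, (convex_Ici 0).convexHull_eq]

lemma orthHull_add_orthHull (S T : Set (Fin n → ℝ)) :
    orthHull S + orthHull T = orthHull (S + T) := by
  simp only [orthHull_eq_convexHull_add, convexHull_add]
  have hIci : Set.Ici (0 : Fin n → ℝ) + Set.Ici 0 = Set.Ici 0 :=
    (Set.Ici_add_Ici_subset 0 0).trans_eq (by rw [add_zero]) |>.antisymm
      fun x hx => ⟨x, hx, 0, Set.mem_Ici.2 le_rfl, add_zero x⟩
  rw [add_add_add_comm, hIci]

lemma convexHull_subset_orthHull (S : Set (Fin n → ℝ)) : convexHull ℝ S ⊆ orthHull S :=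
  convexHull_mono fun _ hm => Set.mem_biUnion hm fun _ => le_rfl

lemma subset_orthHull (S : Set (Fin n → ℝ)) : S ⊆ orthHull S :=
  (subset_convexHull ℝ S).trans (convexHull_subset_orthHull S)

lemma add_mem_orthHull (hx : x ∈ orthHull S) (hq : 0 ≤ q) : x + q ∈ orthHull S := by
  rw [orthHull_eq_convexHull_add] at hx ⊢
  obtain ⟨y, hy, r, hr, rfl⟩ := hx
  exact ⟨y, hy, r + q, add_nonneg hr hq, (add_assoc y r q).symm⟩

lemma orthHull_subset_Ici (hS : S ⊆ Set.Ici 0) : orthHull S ⊆ Set.Ici 0 := by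
  rw [orthHull_eq_convexHull_add]
  rintro _ ⟨y, hy, q, hq, rfl⟩
  exact add_nonneg (convexHull_min hS (convex_Ici 0) hy) (Set.mem_Ici.1 hq)

lemma isClosed_orthHull (hS : S.Finite) : IsClosed (orthHull S) := by
  rw [orthHull_eq_convexHull_add]
  exact isClosed_Ici.add_left_of_isCompact (hS.isCompact_convexHull (𝕜 := ℝ))

lemma le_dotProduct_of_mem_orthHull {c : ℝ} (hu : 0 ≤ u) (hS : ∀ m ∈ S, c ≤ u ⬝ᵥ m)
    (hx : x ∈ orthHull S) : c ≤ u ⬝ᵥ x := by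
  rw [orthHull_eq_convexHull_add] at hx
  obtain ⟨y, hy, q, hq, rfl⟩ := hx
  have hcy : c ≤ u ⬝ᵥ y := convexHull_min hS
    (convex_halfSpace_ge ⟨dotProduct_add u, fun c x => dotProduct_smul c u x⟩ c) hy
  rw [dotProduct_add]
  linarith [dotProduct_nonneg_of_nonneg hu hq]

end OrthHull

section Fmeet

variable {Γ : Set (Fin n → ℝ)} {F : Finset (Fin n → ℝ)} {k u x p q : Fin n → ℝ}

lemma mem_fmeet_iff (hΓ : BddBelow ((u ⬝ᵥ ·) '' Γ)) :
    x ∈ fmeet u Γ ↔ x ∈ Γ ∧ ∀ y ∈ Γ, u ⬝ᵥ x ≤ u ⬝ᵥ y := by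
  simp only [fmeet, dval, dotp_eq_dotProduct, Set.mem_ofPred]
  refine and_congr_right fun hx =>
    Iff.intro (fun h y hy => h ▸ csInf_le hΓ ⟨y, hy, rfl⟩) fun h => ?_
  have hleast : IsLeast ((u ⬝ᵥ ·) '' Γ) (u ⬝ᵥ x) :=
    ⟨⟨x, hx, rfl⟩, by rintro _ ⟨y, hy, rfl⟩; exact h y hy⟩
  exact hleast.csInf_eq.symm

lemma dotProduct_eq_zero_of_mem_vectorSpan_fmeet (hx : x ∈ vectorSpan ℝ (fmeet k Γ)) :
    k ⬝ᵥ x = 0 := by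
  have hle : vectorSpan ℝ (fmeet k Γ) ≤ LinearMap.ker (dotProductEquiv ℝ (Fin n) k) := by
    rw [vectorSpan_def, Submodule.span_le]
    rintro _ ⟨a, ha, b, hb, rfl⟩
    simp only [SetLike.mem_coe, LinearMap.mem_ker, dotProductEquiv_apply_apply, vsub_eq_sub,
      dotProduct_sub, sub_eq_zero]
    exact ha.2.trans hb.2.symm
  simpa using hle hx

lemma minFace_subset_fmeet (hk : 0 ≤ k) (hp : p ∈ fmeet k Γ) : minFace Γ p ⊆ fmeet k Γ :=
  Set.sInter_subset_of_mem ⟨hp, k, hk, rfl⟩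

lemma bddBelow_dotProduct_orthHull (hu : 0 ≤ u) (F : Finset (Fin n → ℝ)) :
    BddBelow ((u ⬝ᵥ ·) '' orthHull (F : Set (Fin n → ℝ))) := by
  obtain ⟨c, hc⟩ := (F.image (u ⬝ᵥ ·)).bddBelow
  refine ⟨c, ?_⟩
  rintro _ ⟨x, hx, rfl⟩
  exact le_dotProduct_of_mem_orthHull hu
    (fun m hm => hc (Finset.mem_coe.2 (Finset.mem_image_of_mem _ hm))) hx

lemma mem_fmeet_orthHull_iff (hu : 0 ≤ u) :
    x ∈ fmeet u (orthHull F) ↔ x ∈ orthHull (F : Set (Fin n → ℝ)) ∧ ∀ m ∈ F, u ⬝ᵥ x ≤ u ⬝ᵥ m := by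
  rw [mem_fmeet_iff (bddBelow_dotProduct_orthHull hu F)]
  exact and_congr_right fun _ => ⟨fun h m hm => h m (subset_orthHull _ hm),
    fun h y hy => le_dotProduct_of_mem_orthHull hu h hy⟩

lemma fmeet_orthHull_smul (hu : 0 ≤ u) {c : ℝ} (hc : 0 < c) :
    fmeet (c • u) (orthHull F) = fmeet u (orthHull F) := by
  ext x
  rw [mem_fmeet_orthHull_iff (smul_nonneg hc.le hu), mem_fmeet_orthHull_iff hu]
  simp only [smul_dotProduct, smul_eq_mul, mul_le_mul_iff_right₀ hc]

lemma exists_mem_fmeet_orthHull (hu : 0 ≤ u) (hF : F.Nonempty) :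
    ∃ m ∈ F, m ∈ fmeet u (orthHull F) := by
  obtain ⟨m, hm, hmin⟩ := F.exists_min_image (u ⬝ᵥ ·) hF
  exact ⟨m, hm, (mem_fmeet_orthHull_iff hu).2 ⟨subset_orthHull _ hm, hmin⟩⟩

lemma add_mem_fmeet_orthHull (hu : 0 ≤ u) (hx : x ∈ fmeet u (orthHull F)) (hq : 0 ≤ q)
    (huq : u ⬝ᵥ q = 0) : x + q ∈ fmeet u (orthHull F) := by
  rw [mem_fmeet_orthHull_iff hu] at hx ⊢
  exact ⟨add_mem_orthHull hx.1 hq, by simpa [dotProduct_add, huq] using hx.2⟩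

lemma exists_eq_add_of_mem_fmeet_orthHull (hu : 0 ≤ u) (hx : x ∈ fmeet u (orthHull F)) :
    ∃ y ∈ convexHull ℝ (F ∩ fmeet u (orthHull F)), ∃ q, 0 ≤ q ∧ u ⬝ᵥ q = 0 ∧ x = y + q := by
  have hx' := (mem_fmeet_orthHull_iff hu).1 hx
  have hxP := hx'.1
  rw [orthHull_eq_convexHull_add] at hxP
  obtain ⟨y, hy, q, hq, rfl⟩ := hxP
  have hxy : u ⬝ᵥ (y + q) ≤ u ⬝ᵥ y :=
    le_dotProduct_of_mem_orthHull hu hx'.2 (convexHull_subset_orthHull _ hy)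
  have huq : u ⬝ᵥ q = 0 := by
    rw [dotProduct_add] at hxy
    exact le_antisymm (by linarith) (dotProduct_nonneg_of_nonneg hu hq)
  have hmin := mem_convexHull_setOf_eq_of_le (dotProductEquiv ℝ (Fin n) u) (c := u ⬝ᵥ (y + q))
    (by simpa using hx'.2) hy (by simp [dotProduct_add, huq])
  refine ⟨y, convexHull_mono ?_ hmin, q, hq, huq, rfl⟩
  rintro m ⟨hm, hmc⟩
  simp only [dotProductEquiv_apply_apply] at hmc
  exact ⟨hm, (mem_fmeet_orthHull_iff hu).2 ⟨subset_orthHull _ hm, fun m' hm' => hmc ▸ hx'.2 m' hm'⟩⟩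

lemma mem_span_single_of_dotProduct_eq_zero (hu : 0 ≤ u) (hq : 0 ≤ q) (huq : u ⬝ᵥ q = 0) :
    q ∈ Submodule.span ℝ ((fun i => Pi.single i 1) '' {i | u i = 0}) := by
  rw [← Finset.univ_sum_single q]
  refine Submodule.sum_mem _ fun i _ => ?_
  rcases mul_eq_zero.1 (mul_eq_zero_of_dotProduct_eq_zero hu hq huq i) with hi | hi
  · rw [show Pi.single i (q i) = q i • Pi.single i (1 : ℝ) by simp [← Pi.single_smul']]
    exact Submodule.smul_mem _ _ (Submodule.subset_span ⟨i, hi, rfl⟩)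
  · rw [hi, Pi.single_zero]
    exact Submodule.zero_mem _

lemma vectorSpan_fmeet_orthHull (hu : 0 ≤ u) (hF : F.Nonempty) :
    vectorSpan ℝ (fmeet u (orthHull F)) = vectorSpan ℝ (F ∩ fmeet u (orthHull F)) ⊔
      Submodule.span ℝ ((fun i => Pi.single i 1) '' {i | u i = 0}) := by
  obtain ⟨m₁, hm₁F, hm₁⟩ := exists_mem_fmeet_orthHull hu hF
  apply le_antisymm
  · rw [vectorSpan_eq_span_vsub_set_right ℝ hm₁, Submodule.span_le]
    rintro _ ⟨x, hx, rfl⟩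
    obtain ⟨y, hy, q, hq, huq, rfl⟩ := exists_eq_add_of_mem_fmeet_orthHull hu hx
    simp only [SetLike.mem_coe, vsub_eq_sub]
    rw [add_sub_right_comm]
    refine Submodule.add_mem _ (Submodule.mem_sup_left ?_)
      (Submodule.mem_sup_right (mem_span_single_of_dotProduct_eq_zero hu hq huq))
    rw [← direction_affineSpan]
    exact AffineSubspace.vsub_mem_direction (convexHull_subset_affineSpan _ hy)
      (subset_affineSpan ℝ _ ⟨hm₁F, hm₁⟩)
  · refine sup_le (vectorSpan_mono ℝ Set.inter_subset_right) (Submodule.span_le.2 ?_)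
    rintro _ ⟨i, hi, rfl⟩
    have hmi := add_mem_fmeet_orthHull hu hm₁ (Pi.single_nonneg.2 zero_le_one)
      (by rw [dotProduct_single, hi, zero_mul])
    simpa using vsub_mem_vectorSpan ℝ hmi hm₁

end Fmeet

section NormalSection

variable {F : Finset (Fin n → ℝ)} {p u v : Fin n → ℝ} {Z : Set (Fin n)}

/-- By `mem_fmeet_orthHull_iff`, the inequalities say that `p` lies on the face
`fmeet u (orthHull F)`. -/
def normalSection (F : Finset (Fin n → ℝ)) (p : Fin n → ℝ) (Z : Set (Fin n)) :
    Set (Fin n → ℝ) :=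
  {u | 0 ≤ u ∧ (∀ i ∈ Z, u i = 0) ∧ (∀ m ∈ F, u ⬝ᵥ p ≤ u ⬝ᵥ m) ∧ ∑ i, u i = 1}

lemma isCompact_normalSection : IsCompact (normalSection F p Z) := by
  have hclosed : IsClosed (normalSection F p Z) := by
    simp only [normalSection, Set.ofPred_and, Set.ofPred_forall]
    refine (isClosed_le continuous_const continuous_id).inter
      ((isClosed_biInter fun i _ => ?_).inter ((isClosed_biInter fun m _ => ?_).inter ?_))
    · exact isClosed_eq (continuous_apply i) continuous_const
    · exact isClosed_le (by fun_prop) (by fun_prop)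
    · exact isClosed_eq (by fun_prop) continuous_const
  refine isCompact_Icc.of_isClosed_subset hclosed (s := Set.Icc 0 1) ?_
  rintro u ⟨hu, -, -, hsum⟩
  refine ⟨hu, fun i => ?_⟩
  rw [Pi.one_apply, ← hsum]
  exact Finset.single_le_sum (fun j _ => hu j) (Finset.mem_univ i)

/-- Constraints that are tight at `u` stay tight along `v`; the others are strict and survive
small perturbations. -/
lemma eventually_add_smul_mem_normalSection (hp : p ∈ orthHull F)
    (hu : u ∈ normalSection F p Z) (hv : ∀ x ∈ vectorSpan ℝ (fmeet u (orthHull F)), v ⬝ᵥ x = 0)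
    (hσ : ∑ i, v i = 0) : ∀ᶠ ε in 𝓝 (0 : ℝ), u + ε • v ∈ normalSection F p Z := by
  obtain ⟨hu0, huZ, huF, hu1⟩ := hu
  have hpu : p ∈ fmeet u (orthHull F) := (mem_fmeet_orthHull_iff hu0).2 ⟨hp, huF⟩
  have hv_const : ∀ x ∈ fmeet u (orthHull F), v ⬝ᵥ x = v ⬝ᵥ p := fun x hx => by
    simpa [dotProduct_sub, sub_eq_zero] using hv _ (vsub_mem_vectorSpan ℝ hx hpu)
  have hvi : ∀ i, u i = 0 → v i = 0 := fun i hi => by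
    simpa [dotProduct_add] using hv_const _ (add_mem_fmeet_orthHull hu0 hpu
      (Pi.single_nonneg.2 zero_le_one) (by simp [hi]))
  have hvm : ∀ m ∈ F, u ⬝ᵥ m - u ⬝ᵥ p = 0 → v ⬝ᵥ m - v ⬝ᵥ p = 0 := fun m hm h => by
    rw [sub_eq_zero] at h ⊢
    exact hv_const m ((mem_fmeet_orthHull_iff hu0).2
      ⟨subset_orthHull _ hm, fun m' hm' => h ▸ huF m' hm'⟩)
  have hcoord : ∀ᶠ ε in 𝓝 (0 : ℝ), ∀ i, 0 ≤ u i + ε * v i :=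
    eventually_all.2 fun i => eventually_nonneg_add_mul (hu0 i) (hvi i)
  have hface : ∀ᶠ ε in 𝓝 (0 : ℝ), ∀ m ∈ F, 0 ≤ (u ⬝ᵥ m - u ⬝ᵥ p) + ε * (v ⬝ᵥ m - v ⬝ᵥ p) :=
    (eventually_all_finset F).2 fun m hm =>
      eventually_nonneg_add_mul (sub_nonneg.2 (huF m hm)) (hvm m hm)
  filter_upwards [hcoord, hface] with ε hε₁ hε₂
  refine ⟨hε₁, fun i hi => by simp [huZ i hi, hvi i (huZ i hi)], fun m hm => ?_, ?_⟩
  · have := hε₂ m hm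
    simp only [add_dotProduct, smul_dotProduct, smul_eq_mul]
    linarith
  · simp [Finset.sum_add_distrib, ← Finset.mul_sum, hu1, hσ]

theorem exists_extremal_normal (hu : 0 ≤ u) (hu0 : u ≠ 0) (hp : p ∈ fmeet u (orthHull F)) :
    ∃ u', 0 ≤ u' ∧ (∀ i, u i = 0 → u' i = 0) ∧ p ∈ fmeet u' (orthHull F) ∧ ∑ i, u' i = 1 ∧
      ∀ v, (∀ x ∈ vectorSpan ℝ (fmeet u' (orthHull F)), v ⬝ᵥ x = 0) → ∑ i, v i = 0 → v = 0 := by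
  have hp' := (mem_fmeet_orthHull_iff hu).1 hp
  have hσ : 0 < ∑ i, u i := by
    obtain ⟨i, hi⟩ := Function.ne_iff.1 hu0
    exact Finset.sum_pos' (fun j _ => hu j) ⟨i, Finset.mem_univ i, (hu i).lt_of_ne' hi⟩
  have hmem : (∑ i, u i)⁻¹ • u ∈ normalSection F p {i | u i = 0} := by
    refine ⟨smul_nonneg (inv_nonneg.2 hσ.le) hu, fun i hi => by simp [Set.mem_ofPred.1 hi],
      fun m hm => ?_, ?_⟩
    · simpa [smul_dotProduct] using mul_le_mul_of_nonneg_left (hp'.2 m hm) (inv_nonneg.2 hσ.le)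
    · simp [← Finset.mul_sum, inv_mul_cancel₀ hσ.ne']
  obtain ⟨u', hu'⟩ := isCompact_normalSection.extremePoints_nonempty ⟨_, hmem⟩
  obtain ⟨hu'0, hu'Z, hu'F, hu'1⟩ := hu'.1
  exact ⟨u', hu'0, hu'Z, (mem_fmeet_orthHull_iff hu'0).2 ⟨hp'.1, hu'F⟩, hu'1, fun v hv hσv =>
    eq_zero_of_mem_extremePoints_of_eventually_add_smul_mem hu'
      (eventually_add_smul_mem_normalSection hp'.1 hu'.1 hv hσv)⟩

end NormalSection

section Orthogonal

variable {V : Submodule ℝ (Fin n → ℝ)} {u : Fin n → ℝ}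

lemma exists_ne_zero_forall_dotProduct_eq_zero (hV : V ≠ ⊤) : ∃ v ≠ 0, ∀ x ∈ V, v ⬝ᵥ x = 0 := by
  obtain ⟨f, hf, hVf⟩ := V.exists_le_ker_of_lt_top hV.lt_top
  set v := (dotProductEquiv ℝ (Fin n)).symm f
  have hvf : dotProductEquiv ℝ (Fin n) v = f := LinearEquiv.apply_symm_apply _ f
  refine ⟨v, fun h => hf (by rw [← hvf, h, map_zero]), fun x hx => ?_⟩
  simpa [← hvf] using hVf hx

lemma ne_top_of_forall_dotProduct_eq_zero (huV : ∀ x ∈ V, u ⬝ᵥ x = 0) (hu : u ≠ 0) : V ≠ ⊤ :=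
  fun h => hu (dotProduct_self_eq_zero.1 (huV u (h ▸ Submodule.mem_top)))

lemma finrank_eq_sub_one_of_forall_dotProduct_eq_zero (huV : ∀ x ∈ V, u ⬝ᵥ x = 0)
    (hu : u ≠ 0) (hV : ∀ v, (∀ x ∈ V, v ⬝ᵥ x = 0) → ∑ i, v i = 0 → v = 0) :
    finrank ℝ V = n - 1 := by
  have hlt : finrank ℝ V < n := by
    simpa using Submodule.finrank_lt (ne_top_of_forall_dotProduct_eq_zero huV hu)
  have htop : V ⊔ Submodule.span ℝ {1} = ⊤ := by
    by_contra h
    obtain ⟨v, hv0, hv⟩ := exists_ne_zero_forall_dotProduct_eq_zero h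
    refine hv0 (hV v (fun x hx => hv x (Submodule.mem_sup_left hx)) ?_)
    simpa [dotProduct_one] using
      hv 1 (Submodule.mem_sup_right (Submodule.mem_span_singleton_self 1))
  have hsup := Submodule.finrank_add_le_finrank_add_finrank V (Submodule.span ℝ {1})
  have hone := finrank_span_le_card (R := ℝ) ({1} : Set (Fin n → ℝ))
  rw [htop, finrank_top, Module.finrank_fin_fun] at hsup
  simp only [Set.toFinset_singleton, Finset.card_singleton] at hone
  omega

lemma eq_smul_of_forall_dotProduct_eq_zero (huV : ∀ x ∈ V, u ⬝ᵥ x = 0) (hu : ∑ i, u i ≠ 0)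
    (hV : ∀ v, (∀ x ∈ V, v ⬝ᵥ x = 0) → ∑ i, v i = 0 → v = 0) {v : Fin n → ℝ}
    (hv : ∀ x ∈ V, v ⬝ᵥ x = 0) : v = ((∑ i, v i) / ∑ i, u i) • u := by
  rw [← sub_eq_zero]
  refine hV _ (fun x hx => by simp [sub_dotProduct, smul_dotProduct, hv x hx, huV x hx]) ?_
  simp [Finset.sum_sub_distrib, ← Finset.mul_sum, div_mul_cancel₀ _ hu]

end Orthogonal

lemma exists_int_ne_zero_forall_dotProduct_eq_zero {S : Set (Fin n → ℝ)}
    (hS : ∀ x ∈ S, ∀ i, ∃ z : ℤ, x i = z) (hS_ne : Submodule.span ℝ S ≠ ⊤) :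
    ∃ t : Fin n → ℤ, t ≠ 0 ∧ ∀ x ∈ Submodule.span ℝ S, (fun i => (t i : ℝ)) ⬝ᵥ x = 0 := by
  obtain ⟨b, hbS, hbspan, hb⟩ := exists_linearIndependent ℝ S
  have : Fintype b := hb.setFinite.fintype
  have hcard : Fintype.card b < n := by
    have := Submodule.finrank_lt hS_ne
    rwa [← hbspan, finrank_span_set_eq_card hb, Set.toFinset_card, Module.finrank_fin_fun] at this
  choose z hz using fun (x : b) i => hS x (hbS x.2) i
  suffices ∃ t : Fin n → ℤ, t ≠ 0 ∧ ∀ x : b, (fun i => (t i : ℝ)) ⬝ᵥ x = 0 by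
    obtain ⟨t, ht, htb⟩ := this
    refine ⟨t, ht, fun x hx => ?_⟩
    have hle : Submodule.span ℝ b ≤ LinearMap.ker (dotProductEquiv ℝ (Fin n) fun i => (t i : ℝ)) :=
      Submodule.span_le.2 fun x hx => by simpa using htb ⟨x, hx⟩
    simpa using hle (hbspan ▸ hx)
  rcases isEmpty_or_nonempty b with hb | hb
  · exact ⟨fun _ => 1, fun h => one_ne_zero (congrFun h ⟨0, by omega⟩), fun x => isEmptyElim x⟩
  -- fewer equations than unknowns: Siegel's lemma
  obtain ⟨t, ht, hAt, -⟩ := Int.Matrix.exists_ne_zero_int_vec_norm_le (Matrix.of z)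
    (by simpa using hcard) Fintype.card_pos
  refine ⟨t, ht, fun x => ?_⟩
  have := congrArg (fun k : ℤ => (k : ℝ)) (congrFun hAt x)
  simp only [Matrix.mulVec, Matrix.of_apply, dotProduct, Pi.zero_apply, Int.cast_sum,
    Int.cast_mul, Int.cast_zero] at this
  rw [show (x : Fin n → ℝ) = fun i => (z x i : ℝ) from funext (hz x), dotProduct_comm]
  exact this

lemma exists_primitive_eq_smul {u : Fin n → ℝ} (hu : 0 ≤ u) {t : Fin n → ℤ} (ht : t ≠ 0)
    {c : ℝ} (htu : (fun i => (t i : ℝ)) = c • u) :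
    ∃ w : Fin n → ℕ, Finset.univ.gcd w = 1 ∧ ∃ c' : ℝ, 0 < c' ∧ natVec w = c' • u := by
  obtain ⟨i₀, hi₀⟩ := Function.ne_iff.1 ht
  have hw₀ : ∀ i, ((t i).natAbs : ℝ) = |c| * u i := fun i => by
    rw [Nat.cast_natAbs, Int.cast_abs, congrFun htu i, Pi.smul_apply, smul_eq_mul, abs_mul,
      abs_of_nonneg (hu i)]
  obtain ⟨w, hw, hgcd⟩ := Finset.univ.extract_gcd (fun i => (t i).natAbs) ⟨i₀, Finset.mem_univ _⟩
  set g := Finset.univ.gcd fun i => (t i).natAbs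
  have hg : 0 < (g : ℝ) := by
    have : g ≠ 0 := fun h => hi₀ (Int.natAbs_eq_zero.1
      (Finset.gcd_eq_zero_iff.1 h i₀ (Finset.mem_univ _)))
    positivity
  have hc : 0 < |c| := abs_pos.2 fun hc => hi₀ (by simpa [hc] using congrFun htu i₀)
  refine ⟨w, hgcd, |c| / g, div_pos hc hg, funext fun i => ?_⟩
  have := hw₀ i
  rw [hw i (Finset.mem_univ i), Nat.cast_mul] at this
  simp only [natVec, Pi.smul_apply, smul_eq_mul]
  rw [div_mul_eq_mul_div, eq_div_iff hg.ne', ← this, mul_comm]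

section Facet

variable {F : Finset (Fin n → ℝ)} {u p : Fin n → ℝ}

lemma exists_int_normal_vectorSpan_fmeet_orthHull (hF : F.Nonempty)
    (hF_int : ∀ m ∈ F, ∀ i, ∃ z : ℤ, m i = z) (hu : 0 ≤ u)
    (hV : vectorSpan ℝ (fmeet u (orthHull F)) ≠ ⊤) :
    ∃ t : Fin n → ℤ, t ≠ 0 ∧
      ∀ x ∈ vectorSpan ℝ (fmeet u (orthHull F)), (fun i => (t i : ℝ)) ⬝ᵥ x = 0 := by
  set T := (F : Set (Fin n → ℝ)) ∩ fmeet u (orthHull F)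
  set E := (fun i => Pi.single i (1 : ℝ)) '' {i | u i = 0}
  have hspan : vectorSpan ℝ (fmeet u (orthHull F)) = Submodule.span ℝ ((T -ᵥ T) ∪ E) := by
    rw [vectorSpan_fmeet_orthHull hu hF, vectorSpan_def, Submodule.span_union]
  rw [hspan] at hV ⊢
  refine exists_int_ne_zero_forall_dotProduct_eq_zero ?_ hV
  rintro _ (⟨a, ⟨ha, -⟩, b, ⟨hb, -⟩, rfl⟩ | ⟨j, -, rfl⟩) i
  · obtain ⟨za, hza⟩ := hF_int a ha i
    obtain ⟨zb, hzb⟩ := hF_int b hb i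
    exact ⟨za - zb, by simp [hza, hzb]⟩
  · exact ⟨(Pi.single j 1 : Fin n → ℤ) i, by by_cases h : i = j <;> simp [h]⟩

theorem exists_primFacetNormal_orthHull (hF : F.Nonempty)
    (hF_int : ∀ m ∈ F, ∀ i, ∃ z : ℤ, m i = z) (hu : 0 ≤ u) (hu0 : u ≠ 0)
    (hp : p ∈ fmeet u (orthHull F)) :
    ∃ w, IsPrimFacetNormal (orthHull F) w ∧ p ∈ fmeet (natVec w) (orthHull F) ∧
      ∀ i, u i = 0 → w i = 0 := by
  obtain ⟨u', hu'0, hu'Z, hpu', hu'1, hV⟩ := exists_extremal_normal hu hu0 hp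
  have hu'ne : u' ≠ 0 := by rintro rfl; simp at hu'1
  have huV : ∀ x ∈ vectorSpan ℝ (fmeet u' (orthHull F)), u' ⬝ᵥ x = 0 := fun _ hx =>
    dotProduct_eq_zero_of_mem_vectorSpan_fmeet hx
  obtain ⟨t, ht, htV⟩ := exists_int_normal_vectorSpan_fmeet_orthHull hF hF_int hu'0
    (ne_top_of_forall_dotProduct_eq_zero huV hu'ne)
  obtain ⟨w, hgcd, c, hc, hw⟩ := exists_primitive_eq_smul hu'0 ht
    (eq_smul_of_forall_dotProduct_eq_zero huV (hu'1 ▸ one_ne_zero) hV htV)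
  have hfw : fmeet (natVec w) (orthHull F) = fmeet u' (orthHull F) := by
    rw [hw, fmeet_orthHull_smul hu'0 hc]
  refine ⟨w, ⟨?_, hgcd, ?_⟩, hfw ▸ hpu', fun i hi => ?_⟩
  · rintro rfl
    refine hu'ne ((smul_eq_zero.1 ?_).resolve_left hc.ne')
    rw [← hw]
    ext i
    simp [natVec]
  · rw [direction_affineSpan, hfw, finrank_eq_sub_one_of_forall_dotProduct_eq_zero huV hu'ne hV]
  · have := congrFun hw i
    simp only [natVec, Pi.smul_apply, smul_eq_mul, hu'Z i hi, mul_zero] at this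
    exact_mod_cast this

end Facet

section Newton

variable {Γ Γ₁ Γ₂ : Set (Fin n → ℝ)} {u x p : Fin n → ℝ}

lemma bddBelow_image_dotProduct (hΓ : Γ ⊆ Set.Ici 0) (hu : 0 ≤ u) :
    BddBelow ((u ⬝ᵥ ·) '' Γ) :=
  ⟨0, by rintro _ ⟨x, hx, rfl⟩; exact dotProduct_nonneg_of_nonneg hu (hΓ hx)⟩

lemma dval_nonneg (hΓ : Γ ⊆ Set.Ici 0) (hu : 0 ≤ u) : 0 ≤ dval u Γ :=
  Real.sInf_nonneg (by rintro _ ⟨x, hx, rfl⟩; exact dotProduct_nonneg_of_nonneg hu (hΓ hx))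

lemma dval_le_dotProduct (hΓ : Γ ⊆ Set.Ici 0) (hu : 0 ≤ u) (hx : x ∈ Γ) : dval u Γ ≤ u ⬝ᵥ x :=
  csInf_le (bddBelow_image_dotProduct hΓ hu) ⟨x, hx, rfl⟩

lemma IsNewtonPolyhedron.isClosed (hΓ : IsNewtonPolyhedron Γ) : IsClosed Γ := by
  obtain ⟨S, -, rfl⟩ := hΓ
  exact isClosed_orthHull (S.finite_toSet.image _)

lemma IsNewtonPolyhedron.subset_Ici (hΓ : IsNewtonPolyhedron Γ) : Γ ⊆ Set.Ici 0 := by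
  obtain ⟨S, -, rfl⟩ := hΓ
  exact orthHull_subset_Ici (by rintro _ ⟨m, -, rfl⟩ i; exact Nat.cast_nonneg _)

lemma IsNewtonPolyhedron.add (h₁ : IsNewtonPolyhedron Γ₁) (h₂ : IsNewtonPolyhedron Γ₂) :
    IsNewtonPolyhedron (Γ₁ + Γ₂) := by
  obtain ⟨S₁, hS₁, rfl⟩ := h₁
  obtain ⟨S₂, hS₂, rfl⟩ := h₂
  refine ⟨S₁ + S₂, hS₁.add hS₂, ?_⟩
  rw [orthHull_add_orthHull, Finset.coe_add]
  exact congrArg orthHull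
    (Set.image_add (AddMonoidHom.compLeft (Nat.castAddMonoidHom ℝ) (Fin n))).symm

theorem IsNewtonPolyhedron.exists_primFacetNormal (hΓ : IsNewtonPolyhedron Γ) (hu : 0 ≤ u)
    (hu0 : u ≠ 0) (hp : p ∈ fmeet u Γ) :
    ∃ w, IsPrimFacetNormal Γ w ∧ p ∈ fmeet (natVec w) Γ ∧ ∀ i, u i = 0 → w i = 0 := by
  obtain ⟨S, hS, rfl⟩ := hΓ
  rw [← Finset.coe_image] at hp ⊢
  refine exists_primFacetNormal_orthHull (hS.image _) ?_ hu hu0 hp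
  simp only [Finset.mem_image]
  rintro _ ⟨m, -, rfl⟩ i
  exact ⟨m i, rfl⟩

theorem exists_mem_Dset_dval_eq_zero (h₁ : IsNewtonPolyhedron Γ₁) (h₂ : IsNewtonPolyhedron Γ₂)
    (hp : p ∈ Γ₁ + Γ₂) {w : Fin n → ℕ} (hw : w ≠ 0)
    (hle : natVec w ⬝ᵥ p ≤ dval (natVec w) Γ₂ - dval (natVec w) Γ₁) :
    ∃ w' ∈ Dset (Γ₁ + Γ₂) p, dval (natVec w') Γ₁ = 0 := by
  have hnat : ∀ w : Fin n → ℕ, 0 ≤ natVec w := fun w i => Nat.cast_nonneg _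
  have hw0 : natVec w ≠ 0 := fun h => hw (funext fun i => by simpa [natVec] using congrFun h i)
  have hΓ₁ := h₁.subset_Ici
  have hΓ₂ := h₂.subset_Ici
  obtain ⟨a, ha, b, hb, rfl⟩ := hp
  have hb_le := dval_le_dotProduct hΓ₂ (hnat w) hb
  have hd₁ := dval_nonneg hΓ₁ (hnat w)
  rw [dotProduct_add] at hle
  have hwa : natVec w ⬝ᵥ a = 0 :=
    le_antisymm (by linarith) (dotProduct_nonneg_of_nonneg (hnat w) (hΓ₁ ha))
  have hface : a + b ∈ fmeet (natVec w) (Γ₁ + Γ₂) := by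
    rw [mem_fmeet_iff (bddBelow_image_dotProduct (h₁.add h₂).subset_Ici (hnat w))]
    refine ⟨Set.add_mem_add ha hb, ?_⟩
    rintro _ ⟨a', ha', b', hb', rfl⟩
    rw [dotProduct_add, dotProduct_add]
    linarith [dval_le_dotProduct hΓ₁ (hnat w) ha', dval_le_dotProduct hΓ₂ (hnat w) hb']
  obtain ⟨w', hw', hface', hsupp⟩ := (h₁.add h₂).exists_primFacetNormal (hnat w) hw0 hface
  refine ⟨w', ⟨hw', minFace_subset_fmeet (hnat w') hface'⟩,
    le_antisymm ?_ (dval_nonneg hΓ₁ (hnat w'))⟩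
  calc dval (natVec w') Γ₁ ≤ natVec w' ⬝ᵥ a := dval_le_dotProduct hΓ₁ (hnat w') ha
    _ = 0 := dotProduct_eq_zero_of_forall_eq_zero_imp (hnat w) (hΓ₁ ha) hwa fun i hi => by
      simp [natVec, hsupp i (by simpa [natVec] using hi)]

end Newton

theorem pm_inv_t0_not_candidate_pole_general
    (Γf Γg : Set (Fin n → ℝ))
    (hΓf : IsNewtonPolyhedron Γf) (hΓg : IsNewtonPolyhedron Γg)
    (t₀ : ℝ) (ht₀ : 0 < t₀)
    (hdiag : (fun _ : Fin n => t₀) ∈ frontier (Γf + Γg))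
    (hD : ∀ w ∈ Dset (Γf + Γg) (fun _ => t₀),
      dval (natVec w) Γf ≠ 0 ∧ dval (natVec w) Γg ≠ 0) :
    (¬ ∃ w : Fin n → ℕ, w ≠ 0 ∧ 0 < dval (natVec w) Γg - dval (natVec w) Γf ∧
        sigmaS (natVec w) / (dval (natVec w) Γg - dval (natVec w) Γf) = 1 / t₀) ∧
    (¬ ∃ w : Fin n → ℕ, w ≠ 0 ∧ 0 < dval (natVec w) Γf - dval (natVec w) Γg ∧
        -(sigmaS (natVec w)) / (dval (natVec w) Γf - dval (natVec w) Γg) = -(1 / t₀)) := by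
  have hp : (fun _ : Fin n => t₀) ∈ Γf + Γg := (hΓf.add hΓg).isClosed.frontier_subset hdiag
  have hdiag_le : ∀ (w : Fin n → ℕ) {d : ℝ}, 0 < d → sigmaS (natVec w) / d = 1 / t₀ →
      natVec w ⬝ᵥ (fun _ => t₀) ≤ d := fun w d hd h => by
    rw [div_eq_div_iff hd.ne' ht₀.ne', one_mul] at h
    rw [← h, sigmaS, Finset.sum_mul]
    exact le_rfl
  refine ⟨fun ⟨w, hw, hpos, hval⟩ => ?_, fun ⟨w, hw, hpos, hval⟩ => ?_⟩
  · obtain ⟨w', hw', h0⟩ := exists_mem_Dset_dval_eq_zero hΓf hΓg hp hw (hdiag_le w hpos hval)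
    exact (hD w' hw').1 h0
  · rw [neg_div, neg_inj] at hval
    obtain ⟨w', hw', h0⟩ :=
      exists_mem_Dset_dval_eq_zero hΓg hΓf (add_comm Γf Γg ▸ hp) hw (hdiag_le w hpos hval)
    exact (hD w' (add_comm Γg Γf ▸ hw')).2 h0

/-- if `d(w,Γ(f)) ≠ 0` and `d(w,Γ(g)) ≠ 0` for every `w ∈ D(t₀)`, then
no `w ∈ T₊` realizes the value `1/t₀` and no `w ∈ T₋` realizes `−1/t₀`; i.e.
`±1/t₀` are not candidate poles coming from the cones. -/
theorem pm_inv_t0_not_candidate_pole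
    (hn : 2 ≤ n)
    (Γf Γg : Set (Fin n → ℝ))
    (hΓf : IsNewtonPolyhedron Γf) (hΓg : IsNewtonPolyhedron Γg)
    (t₀ : ℝ) (ht₀ : 0 < t₀)
    (hdiag : (fun _ : Fin n => t₀) ∈ frontier (Γf + Γg))
    (hD : ∀ w ∈ Dset (Γf + Γg) (fun _ => t₀),
      dval (natVec w) Γf ≠ 0 ∧ dval (natVec w) Γg ≠ 0) :
    (¬ ∃ w : Fin n → ℕ, w ≠ 0 ∧ 0 < dval (natVec w) Γg - dval (natVec w) Γf ∧
        sigmaS (natVec w) / (dval (natVec w) Γg - dval (natVec w) Γf) = 1 / t₀) ∧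
    (¬ ∃ w : Fin n → ℕ, w ≠ 0 ∧ 0 < dval (natVec w) Γf - dval (natVec w) Γg ∧
        -(sigmaS (natVec w)) / (dval (natVec w) Γf - dval (natVec w) Γg) = -(1 / t₀)) :=
  pm_inv_t0_not_candidate_pole_general Γf Γg hΓf hΓg t₀ ht₀ hdiag hD
end

section
/- If (t₀,…,t₀) ∈ F(w, Γ(f)) for some w ∈ D(t₀), i.e. the diagonal point lies on the boundary of Γ(f) in the face determined by w, then d(w,Γ(g)) = 0, d(w,Γ(f)) ≠ 0, and σ(w)/(d(w,Γ(f)) − d(w,Γ(g))) = σ(w)/d(w,Γ(f)) = 1/t₀. Hence w ∈ T₋ and the largest candidate negative real pole β equals −1/t₀. -/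
open Finset Pointwise

variable {n : ℕ}

/-!
Pairing the diagonal point `p = (t₀,…,t₀)`, which lies in the closure of `Γ(f) + Γ(g)`, with any
`v ≥ 0` gives `d(v,Γ(f)) + d(v,Γ(g)) ≤ σ(v) t₀`. Since `d(v,Γ(g)) ≥ 0`, also
`d(v,Γ(f)) − d(v,Γ(g)) ≤ σ(v) t₀`, i.e. `−σ(v)/(d(v,Γ(f)) − d(v,Γ(g))) ≤ −1/t₀` on `T₋`.
For `w` with `p ∈ F(w,Γ(f))` we have `d(w,Γ(f)) = σ(w) t₀`, which forces `d(w,Γ(g)) = 0`, so `w`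
attains the bound.
-/

namespace IsNewtonPolyhedron

variable {Γ : Set (Fin n → ℝ)}

lemma subset_nonneg (h : IsNewtonPolyhedron Γ) : Γ ⊆ {x | ∀ i, 0 ≤ x i} := by
  obtain ⟨S, -, rfl⟩ := h
  refine convexHull_min ?_ (convex_Ici (0 : Fin n → ℝ))
  simp only [Set.iUnion_subset_iff, Set.forall_mem_image]
  intro m _ x hx i
  exact (Nat.cast_nonneg (m i)).trans (hx i)

lemma nonempty (h : IsNewtonPolyhedron Γ) : Γ.Nonempty := by
  obtain ⟨S, ⟨m, hm⟩, rfl⟩ := h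
  refine ⟨fun i => (m i : ℝ), subset_convexHull ℝ _ ?_⟩
  simp only [Set.mem_iUnion]
  exact ⟨_, ⟨m, hm, rfl⟩, fun _ => le_rfl⟩

end IsNewtonPolyhedron

lemma natVec_nonneg (v : Fin n → ℕ) (i : Fin n) : 0 ≤ natVec v i := Nat.cast_nonneg _

lemma sigmaS_natVec_pos {w : Fin n → ℕ} (hw : w ≠ 0) : 0 < sigmaS (natVec w) := by
  obtain ⟨i, hi⟩ := Function.ne_iff.1 hw
  refine Finset.sum_pos' (fun j _ => natVec_nonneg w j) ⟨i, Finset.mem_univ i, ?_⟩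
  exact Nat.cast_pos.2 (Nat.pos_of_ne_zero hi)

lemma dotp_add (k x y : Fin n → ℝ) : dotp k (x + y) = dotp k x + dotp k y := by
  simp only [dotp, Pi.add_apply, mul_add, Finset.sum_add_distrib]

lemma dotp_const (k : Fin n → ℝ) (t : ℝ) : dotp k (fun _ => t) = sigmaS k * t := by
  simp only [dotp, sigmaS, Finset.sum_mul]

lemma dotp_nonneg {k x : Fin n → ℝ} (hk : ∀ i, 0 ≤ k i) (hx : ∀ i, 0 ≤ x i) :
    0 ≤ dotp k x :=
  Finset.sum_nonneg fun i _ => mul_nonneg (hk i) (hx i)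

lemma continuous_dotp (k : Fin n → ℝ) : Continuous (dotp k) :=
  continuous_finsetSum _ fun i _ => continuous_const.mul (continuous_apply i)

section NonnegWeight

variable {k : Fin n → ℝ} {Γ : Set (Fin n → ℝ)}

lemma dval_nonneg_s9 (hk : ∀ i, 0 ≤ k i) (hΓ : IsNewtonPolyhedron Γ) : 0 ≤ dval k Γ :=
  le_csInf (hΓ.nonempty.image _) <| by
    rintro _ ⟨x, hx, rfl⟩
    exact dotp_nonneg hk (hΓ.subset_nonneg hx)

lemma dval_le_dotp (hk : ∀ i, 0 ≤ k i) (hΓ : IsNewtonPolyhedron Γ) {x : Fin n → ℝ}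
    (hx : x ∈ Γ) : dval k Γ ≤ dotp k x :=
  csInf_le ⟨0, by rintro _ ⟨y, hy, rfl⟩; exact dotp_nonneg hk (hΓ.subset_nonneg hy)⟩
    ⟨x, hx, rfl⟩

lemma dval_add_dval_le_dotp {Γ' : Set (Fin n → ℝ)} (hk : ∀ i, 0 ≤ k i)
    (hΓ : IsNewtonPolyhedron Γ) (hΓ' : IsNewtonPolyhedron Γ') {p : Fin n → ℝ}
    (hp : p ∈ closure (Γ + Γ')) : dval k Γ + dval k Γ' ≤ dotp k p := by
  have hclosed : IsClosed {x | dval k Γ + dval k Γ' ≤ dotp k x} :=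
    isClosed_le continuous_const (continuous_dotp k)
  refine hclosed.closure_subset_iff.2 ?_ hp
  rintro _ ⟨a, ha, b, hb, rfl⟩
  rw [Set.mem_ofPred_eq, dotp_add]
  exact add_le_add (dval_le_dotp hk hΓ ha) (dval_le_dotp hk hΓ' hb)

lemma dval_sub_dval_le_of_const_mem_closure {Γ' : Set (Fin n → ℝ)} (hk : ∀ i, 0 ≤ k i)
    (hΓ : IsNewtonPolyhedron Γ) (hΓ' : IsNewtonPolyhedron Γ') {t : ℝ}
    (ht : (fun _ => t) ∈ closure (Γ + Γ')) : dval k Γ - dval k Γ' ≤ sigmaS k * t := by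
  have := dval_add_dval_le_dotp hk hΓ hΓ' ht
  rw [dotp_const] at this
  linarith [dval_nonneg_s9 hk hΓ']

lemma dval_eq_zero_of_const_mem_fmeet {Γ' : Set (Fin n → ℝ)} (hk : ∀ i, 0 ≤ k i)
    (hΓ : IsNewtonPolyhedron Γ) (hΓ' : IsNewtonPolyhedron Γ') {t : ℝ}
    (ht : (fun _ => t) ∈ closure (Γ + Γ')) (hF : (fun _ => t) ∈ fmeet k Γ) :
    dval k Γ' = 0 := by
  have := dval_add_dval_le_dotp hk hΓ hΓ' ht
  rw [hF.2] at this
  linarith [dval_nonneg_s9 hk hΓ']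

end NonnegWeight

lemma neg_sigmaS_div_le_of_const_mem_closure {Γ Γ' : Set (Fin n → ℝ)}
    (hΓ : IsNewtonPolyhedron Γ) (hΓ' : IsNewtonPolyhedron Γ') {t : ℝ} (ht : 0 < t)
    (hclosure : (fun _ => t) ∈ closure (Γ + Γ')) {v : Fin n → ℕ}
    (hv : 0 < dval (natVec v) Γ - dval (natVec v) Γ') :
    -sigmaS (natVec v) / (dval (natVec v) Γ - dval (natVec v) Γ') ≤ -(1 / t) := by
  rw [neg_div, neg_le_neg_iff, div_le_div_iff₀ ht hv, one_mul]
  exact dval_sub_dval_le_of_const_mem_closure (natVec_nonneg v) hΓ hΓ' hclosure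

theorem beta_eq_neg_inv_t0_general
    (Γf Γg : Set (Fin n → ℝ))
    (hΓf : IsNewtonPolyhedron Γf) (hΓg : IsNewtonPolyhedron Γg)
    (t₀ : ℝ) (ht₀ : 0 < t₀)
    (hdiag : (fun _ : Fin n => t₀) ∈ frontier (Γf + Γg))
    (w : Fin n → ℕ) (hw : w ∈ Dset (Γf + Γg) (fun _ => t₀))
    (hF : (fun _ : Fin n => t₀) ∈ fmeet (natVec w) Γf) :
    dval (natVec w) Γg = 0 ∧
    dval (natVec w) Γf ≠ 0 ∧
    sigmaS (natVec w) / (dval (natVec w) Γf - dval (natVec w) Γg)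
      = sigmaS (natVec w) / dval (natVec w) Γf ∧
    sigmaS (natVec w) / dval (natVec w) Γf = 1 / t₀ ∧
    0 < dval (natVec w) Γf - dval (natVec w) Γg ∧
    sSup {r : ℝ | ∃ v : Fin n → ℕ, v ≠ 0 ∧
        0 < dval (natVec v) Γf - dval (natVec v) Γg ∧
        r = -(sigmaS (natVec v)) / (dval (natVec v) Γf - dval (natVec v) Γg)}
      = -(1 / t₀) := by
  have hclosure := frontier_subset_closure hdiag
  have hσ := sigmaS_natVec_pos hw.1.1
  have hdf : dval (natVec w) Γf = sigmaS (natVec w) * t₀ := by rw [← hF.2, dotp_const]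
  have hdf_pos : 0 < dval (natVec w) Γf := hdf ▸ mul_pos hσ ht₀
  have hdg : dval (natVec w) Γg = 0 :=
    dval_eq_zero_of_const_mem_fmeet (natVec_nonneg w) hΓf hΓg hclosure hF
  have hratio : sigmaS (natVec w) / dval (natVec w) Γf = 1 / t₀ := by
    rw [hdf]; field_simp
  have hgap : 0 < dval (natVec w) Γf - dval (natVec w) Γg := by rwa [hdg, sub_zero]
  refine ⟨hdg, hdf_pos.ne', by rw [hdg, sub_zero], hratio, hgap, IsGreatest.csSup_eq ⟨?_, ?_⟩⟩
  · refine ⟨w, hw.1.1, hgap, ?_⟩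
    rw [hdg, sub_zero, neg_div, hratio]
  · rintro _ ⟨v, -, hv, rfl⟩
    exact neg_sigmaS_div_le_of_const_mem_closure hΓf hΓg ht₀ hclosure hv

/-- if the diagonal point `(t₀,…,t₀)` lies in `F(w,Γ(f))` for some
`w ∈ D(t₀)`, then `d(w,Γ(g)) = 0`, `d(w,Γ(f)) ≠ 0`,
`σ(w)/(d(w,Γ(f)) − d(w,Γ(g))) = σ(w)/d(w,Γ(f)) = 1/t₀`, `w ∈ T₋`, and the largest
candidate negative real pole `β` equals `−1/t₀`. -/
theorem beta_eq_neg_inv_t0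
    (hn : 2 ≤ n)
    (Γf Γg : Set (Fin n → ℝ))
    (hΓf : IsNewtonPolyhedron Γf) (hΓg : IsNewtonPolyhedron Γg)
    (t₀ : ℝ) (ht₀ : 0 < t₀)
    (hdiag : (fun _ : Fin n => t₀) ∈ frontier (Γf + Γg))
    (w : Fin n → ℕ) (hw : w ∈ Dset (Γf + Γg) (fun _ => t₀))
    (hF : (fun _ : Fin n => t₀) ∈ fmeet (natVec w) Γf) :
    dval (natVec w) Γg = 0 ∧
    dval (natVec w) Γf ≠ 0 ∧
    sigmaS (natVec w) / (dval (natVec w) Γf - dval (natVec w) Γg)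
      = sigmaS (natVec w) / dval (natVec w) Γf ∧
    sigmaS (natVec w) / dval (natVec w) Γf = 1 / t₀ ∧
    0 < dval (natVec w) Γf - dval (natVec w) Γg ∧
    sSup {r : ℝ | ∃ v : Fin n → ℕ, v ≠ 0 ∧
        0 < dval (natVec v) Γf - dval (natVec v) Γg ∧
        r = -(sigmaS (natVec v)) / (dval (natVec v) Γf - dval (natVec v) Γg)}
      = -(1 / t₀) :=
  beta_eq_neg_inv_t0_general Γf Γg hΓf hΓg t₀ ht₀ hdiag w hw hF
end
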